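/- Let H be a complex separable Hilbert space, K a bounded linear operator on H with closed range R(K), and K† its Moore–Penrose pseudo-inverse. Let (f_k)_{k∈I} be a K-frame for H with synthesis operator T_F, let (g_k)_{k∈I} be a K-dual of (f_k), and set h_k := (K†)* g_k for each k. Then the reconstruction property 'for every x ∈ R(K) the family (⟨h_k, x⟩ f_k)_{k∈I} is unconditionally summable with sum x' holds if and only if there exists a bounded linear operator M : ℓ²(I) → H with range contained in R(K) such that M(T_F* x) = x for every x ∈ R(K) and h_k = M e_k for every k ∈ I, where (e_k) is the standard orthonormal basis of ℓ²(I). -/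

import Mathlib

/-!
Both sides of the equivalence hold outright. For `x = K z` the `K`-dual identity at `K† x` reads
`∑ ⟪g k, K† x⟫ f k = K K† x = x`, and `⟪g k, K† x⟫ = ⟪(K†)* g k, x⟫`. For the operator take
`M := (U K†)* = (K†)* U*`, where `U x = (⟪g k, x⟫)ₖ` is the analysis operator of `g`: then
`M e_k = (K†)* g k`; from `T_F U = K` we get `M T_F* = (K K†)* = K K†`, the identity on `R(K)`;
and `(K†)* = (K† K K†)* = K K† (K†)*` shows `R(M) ⊆ R(K)`.
-/

open ContinuousLinearMap
open scoped lp InnerProductSpace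

section

variable {𝕜 E ι : Type*} [RCLike 𝕜] [NormedAddCommGroup E] [InnerProductSpace 𝕜 E]

def IsBesselSeq (g : ι → E) (D : ℝ) : Prop :=
  ∀ x : E, Summable (fun k => ‖⟪g k, x⟫_𝕜‖ ^ 2) ∧ ∑' k, ‖⟪g k, x⟫_𝕜‖ ^ 2 ≤ D * ‖x‖ ^ 2

namespace IsBesselSeq

variable {g : ι → E} {D : ℝ}

theorem memℓp (hg : IsBesselSeq (𝕜 := 𝕜) g D) (x : E) :
    Memℓp (fun k => ⟪g k, x⟫_𝕜) 2 :=
  memℓp_gen (by simpa using (hg x).1)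

noncomputable def analysis (hg : IsBesselSeq (𝕜 := 𝕜) g D) : E →L[𝕜] ℓ²(ι, 𝕜) :=
  LinearMap.mkContinuous
    { toFun := fun x => ⟨fun k => ⟪g k, x⟫_𝕜, hg.memℓp x⟩
      map_add' := fun x y => lp.ext <| funext fun k => inner_add_right _ _ _
      map_smul' := fun c x => lp.ext <| funext fun k => inner_smul_right _ _ _ }
    (√D) fun x => by
      have hnorm : ‖(⟨fun k => ⟪g k, x⟫_𝕜, hg.memℓp x⟩ : ℓ²(ι, 𝕜))‖ ^ 2
          = ∑' k, ‖⟪g k, x⟫_𝕜‖ ^ 2 := by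
        simpa using lp.norm_rpow_eq_tsum (p := 2) (by simp) ⟨_, hg.memℓp x⟩
      calc _ = √(∑' k, ‖⟪g k, x⟫_𝕜‖ ^ 2) := by rw [← hnorm, Real.sqrt_sq (norm_nonneg _)]; rfl
        _ ≤ √(D * ‖x‖ ^ 2) := Real.sqrt_le_sqrt (hg x).2
        _ = √D * ‖x‖ := by rw [Real.sqrt_mul' _ (sq_nonneg _), Real.sqrt_sq (norm_nonneg _)]

@[simp]
theorem analysis_apply (hg : IsBesselSeq (𝕜 := 𝕜) g D) (x : E) (k : ι) :
    hg.analysis x k = ⟪g k, x⟫_𝕜 :=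
  rfl

theorem adjoint_analysis_single [CompleteSpace E] [DecidableEq ι]
    (hg : IsBesselSeq (𝕜 := 𝕜) g D) (k : ι) :
    adjoint hg.analysis (lp.single 2 k 1) = g k :=
  ext_inner_right 𝕜 fun x => by
    simp [adjoint_inner_left, lp.inner_single_left]

end IsBesselSeq

theorem hasSum_smul_of_apply_single [DecidableEq ι] {f : ι → E} (T : ℓ²(ι, 𝕜) →L[𝕜] E)
    (hT : ∀ k, T (lp.single 2 k 1) = f k) (a : ℓ²(ι, 𝕜)) :
    HasSum (fun k => a k • f k) (T a) := by
  have := (lp.hasSum_single ENNReal.ofNat_ne_top a).mapL T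
  simpa [← hT, ← map_smul, ← lp.single_smul] using this

section MoorePenrose

variable {K Kd : E →L[𝕜] E}

theorem apply_pinv_apply_of_mem_range (hK : K.comp (Kd.comp K) = K) {x : E}
    (hx : x ∈ Set.range K) : K (Kd x) = x := by
  obtain ⟨z, rfl⟩ := hx
  exact DFunLike.congr_fun hK z

variable [CompleteSpace E]

theorem adjoint_pinv_eq (hKd : Kd.comp (K.comp Kd) = Kd)
    (hKKd : adjoint (K.comp Kd) = K.comp Kd) : adjoint Kd = (K.comp Kd).comp (adjoint Kd) := by
  conv_lhs => rw [← hKd, adjoint_comp, hKKd]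

theorem range_adjoint_pinv_subset (hKd : Kd.comp (K.comp Kd) = Kd)
    (hKKd : adjoint (K.comp Kd) = K.comp Kd) : Set.range (adjoint Kd) ⊆ Set.range K := by
  rintro _ ⟨y, rfl⟩
  exact ⟨Kd (adjoint Kd y), (DFunLike.congr_fun (adjoint_pinv_eq hKd hKKd) y).symm⟩

end MoorePenrose

end

theorem reconstruction_characterization_general
    {H : Type*} [NormedAddCommGroup H] [InnerProductSpace ℂ H]
    [CompleteSpace H]
    {I : Type*} [DecidableEq I]
    (K Kd : H →L[ℂ] H) (f g : I → H)
    (TF : lp (fun _ : I => ℂ) 2 →L[ℂ] H)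
    (hTF : ∀ k, TF (lp.single 2 k 1) = f k)
    (hKd1 : K.comp (Kd.comp K) = K)
    (hKd2 : Kd.comp (K.comp Kd) = Kd)
    (hKd3 : adjoint (K.comp Kd) = K.comp Kd)
    (hg : ∃ D : ℝ, 0 < D ∧ ∀ x : H, Summable (fun k => ‖(inner ℂ (g k) x : ℂ)‖ ^ 2) ∧
      ∑' k, ‖(inner ℂ (g k) x : ℂ)‖ ^ 2 ≤ D * ‖x‖ ^ 2)
    (hdual : ∀ x : H, HasSum (fun k => (inner ℂ (g k) x : ℂ) • f k) (K x)) :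
    (∀ x ∈ Set.range ⇑K,
        HasSum (fun k => (inner ℂ ((adjoint Kd) (g k)) x : ℂ) • f k) x) ↔
      ∃ M : lp (fun _ : I => ℂ) 2 →L[ℂ] H,
        Set.range ⇑M ⊆ Set.range ⇑K ∧
        (∀ x ∈ Set.range ⇑K, M ((adjoint TF) x) = x) ∧
        ∀ k, (adjoint Kd) (g k) = M (lp.single 2 k 1) := by
  obtain ⟨D, -, hBessel⟩ := hg
  let U := IsBesselSeq.analysis (𝕜 := ℂ) hBessel
  have hTFU : TF.comp U = K :=
    ext fun z => (hasSum_smul_of_apply_single TF hTF (U z)).unique (hdual z)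
  have hreconstruct : ∀ x ∈ Set.range K,
      HasSum (fun k => ⟪adjoint Kd (g k), x⟫_ℂ • f k) x := fun x hx => by
    simpa only [adjoint_inner_left, apply_pinv_apply_of_mem_range hKd1 hx] using hdual (Kd x)
  refine iff_of_true hreconstruct ⟨adjoint (U.comp Kd), ?_, fun x hx => ?_, fun k => ?_⟩
  · rw [adjoint_comp, coe_comp]
    exact (Set.range_comp_subset_range _ _).trans (range_adjoint_pinv_subset hKd2 hKd3)
  · calc adjoint (U.comp Kd) (adjoint TF x) = adjoint (TF.comp (U.comp Kd)) x := by
          rw [adjoint_comp TF]; rfl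
      _ = adjoint (K.comp Kd) x := by rw [← comp_assoc, hTFU]
      _ = x := by rw [hKd3]; exact apply_pinv_apply_of_mem_range hKd1 hx
  · rw [adjoint_comp, comp_apply]
    exact congrArg (adjoint Kd) (IsBesselSeq.adjoint_analysis_single hBessel k).symm

/-- for `K` with closed range and Moore–Penrose pseudo-inverse `K†`, a
`K`-frame `(f k)` with synthesis operator `T_F`, a `K`-dual `(g k)` of `(f k)`, and
`h k := (K†)* g k`, the reconstruction `x = ∑ₖ ⟨h k, x⟩ • f k` for all `x ∈ R(K)` holds
iff `h k = M e_k` for some bounded `M : ℓ²(I) → H` with range in `R(K)` that is a left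
inverse of `T_F*` on `R(K)`. -/
theorem reconstruction_characterization
    {H : Type*} [NormedAddCommGroup H] [InnerProductSpace ℂ H]
    [CompleteSpace H] [TopologicalSpace.SeparableSpace H]
    {I : Type*} [Countable I] [DecidableEq I]
    (K Kd : H →L[ℂ] H) (f g : I → H)
    (TF : lp (fun _ : I => ℂ) 2 →L[ℂ] H)
    (hTF : ∀ k, TF (lp.single 2 k 1) = f k)
    (hK : IsClosed (Set.range ⇑K))
    (hKd1 : K.comp (Kd.comp K) = K)
    (hKd2 : Kd.comp (K.comp Kd) = Kd)
    (hKd3 : adjoint (K.comp Kd) = K.comp Kd)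
    (hKd4 : adjoint (Kd.comp K) = Kd.comp K)
    (A B : ℝ) (hA : 0 < A) (hB : 0 < B)
    (hf : ∀ x : H, Summable (fun k => ‖(inner ℂ (f k) x : ℂ)‖ ^ 2) ∧
      A * ‖adjoint K x‖ ^ 2 ≤ ∑' k, ‖(inner ℂ (f k) x : ℂ)‖ ^ 2 ∧
      ∑' k, ‖(inner ℂ (f k) x : ℂ)‖ ^ 2 ≤ B * ‖x‖ ^ 2)
    (hg : ∃ D : ℝ, 0 < D ∧ ∀ x : H, Summable (fun k => ‖(inner ℂ (g k) x : ℂ)‖ ^ 2) ∧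
      ∑' k, ‖(inner ℂ (g k) x : ℂ)‖ ^ 2 ≤ D * ‖x‖ ^ 2)
    (hdual : ∀ x : H, HasSum (fun k => (inner ℂ (g k) x : ℂ) • f k) (K x)) :
    (∀ x ∈ Set.range ⇑K,
        HasSum (fun k => (inner ℂ ((adjoint Kd) (g k)) x : ℂ) • f k) x) ↔
      ∃ M : lp (fun _ : I => ℂ) 2 →L[ℂ] H,
        Set.range ⇑M ⊆ Set.range ⇑K ∧
        (∀ x ∈ Set.range ⇑K, M ((adjoint TF) x) = x) ∧
        ∀ k, (adjoint Kd) (g k) = M (lp.single 2 k 1) :=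
  reconstruction_characterization_general K Kd f g TF hTF hKd1 hKd2 hKd3 hg hdual
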